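/- arXiv:1309.7832 — 4 statements merged into one kernel-verified Lean document; each statement's English description precedes it below -/
import Mathlib

section
/- Let u be a binary word of length n and density h, obtained as the k-fold concatenation v^k of an aperiodic word v, so that k divides gcd(n,h); then u has exactly n/k distinct cyclic shifts, and the matrix formed by these n/k distinct shifts has all column sums equal to h/k. -/
/-- Cyclic shift by `k` positions of a binary word of length `n`. -/
def cshift {n : ℕ} (u : Fin n → Bool) (k : ℕ) : Fin n → Bool :=
  fun i => u ⟨((i : ℕ) + k) % n, Nat.mod_lt _ i.pos⟩

/-- Density of a binary word: number of positions equal to `1`. -/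
def density {n : ℕ} (u : Fin n → Bool) : ℕ :=
  (Finset.univ.filter (fun i => u i = true)).card

/-- A word is aperiodic if no nontrivial cyclic shift fixes it. -/
def Aperiodic {n : ℕ} (u : Fin n → Bool) : Prop :=
  ∀ k, k < n → 0 < k → cshift u k ≠ u


lemma cshift_comp {n : ℕ} (v : Fin n → Bool) (a b : ℕ) :
    cshift (cshift v a) b = cshift v (b + a) := by
  funext i
  simp only [cshift]
  exact congrArg v (Fin.ext (by simp [Nat.mod_add_mod, Nat.add_assoc]))

lemma cshift_n {n : ℕ} (v : Fin n → Bool) : cshift v n = v := by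
  funext i
  simp only [cshift]
  exact congrArg v (Fin.ext (by simp [Nat.add_mod_right, Nat.mod_eq_of_lt i.isLt]))

lemma cshift_inj {n : ℕ} (v : Fin n → Bool) (hv : Aperiodic v) {a b : ℕ}
    (ha : a < n) (hb : b < n) (h : cshift v a = cshift v b) : a = b := by
  by_contra hne
  wlog hab : a < b generalizing a b
  · exact this hb ha h.symm (Ne.symm hne) (by omega)
  have h2 : cshift v (a + (n - b)) = v := by
    have e1 : cshift (cshift v a) (n - b) = cshift (cshift v b) (n - b) := by rw [h]
    rw [cshift_comp, cshift_comp] at e1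
    have hb' : n - b + b = n := by omega
    rw [hb', cshift_n, Nat.add_comm] at e1
    exact e1
  exact hv (a + (n - b)) (by omega) (by omega) h2

lemma mod_shift_eq {m : ℕ} (hm : 0 < m) (i t : ℕ) (ht : t < m) :
    (i + (m - i % m + t) % m) % m = t := by
  rw [Nat.add_mod_mod]
  have h1 : i + (m - i % m + t) = m * (i / m) + (m + t) := by
    have h2 := Nat.div_add_mod i m
    have h3 := Nat.mod_lt i hm
    omega
  rw [h1, Nat.mul_add_mod, Nat.add_mod_left, Nat.mod_eq_of_lt ht]

/-- If `u = v^k` is the `k`-fold concatenation of an aperiodic word `v` of length `m`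
(so `u` has length `n = m * k`), then `u` has exactly `n / k` distinct cyclic shifts, and
the matrix of these `n / k` distinct shifts has all column sums equal to `h / k`, where
`h` is the density of `u`. -/
theorem power_word_shift_matrix (m k : ℕ) (hm : 0 < m) (hk : 0 < k)
    (v : Fin m → Bool) (hv : Aperiodic v)
    (u : Fin (m * k) → Bool)
    (hu : ∀ i : Fin (m * k), u i = v ⟨(i : ℕ) % m, Nat.mod_lt _ hm⟩) :
    (Finset.univ.image (fun j : Fin (m * k) => cshift u j)).card = (m * k) / k ∧
    (∀ i : Fin (m * k),
      ((Finset.range ((m * k) / k)).filter (fun j => cshift u j i = true)).card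
        = density u / k) := by
  classical
  have hmk : 0 < m * k := Nat.mul_pos hm hk
  have hdvd : m ∣ m * k := dvd_mul_right m k
  have hdivk : (m * k) / k = m := Nat.mul_div_cancel m hk
  have key : ∀ (j : ℕ) (i : Fin (m * k)),
      cshift u j i = v ⟨((i : ℕ) + j) % m, Nat.mod_lt _ hm⟩ := by
    intro j i
    simp only [cshift]
    rw [hu]
    exact congrArg v (Fin.ext (Nat.mod_mod_of_dvd _ hdvd))
  have keymod : ∀ j : ℕ, cshift u (j % m) = cshift u j := by
    intro j
    funext i
    rw [key, key]
    exact congrArg v (Fin.ext (Nat.add_mod_mod _ _ _))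
  have desc : ∀ a b : ℕ, cshift u a = cshift u b → cshift v a = cshift v b := by
    intro a b h
    funext i'
    have hi : (i' : ℕ) < m * k := lt_of_lt_of_le i'.isLt (Nat.le_mul_of_pos_right m hk)
    have h2 := congrFun h ⟨(i' : ℕ), hi⟩
    rw [key, key] at h2
    simpa only [cshift] using h2
  constructor
  · rw [hdivk]
    have himg : (Finset.univ.image (fun j : Fin (m * k) => cshift u j))
        = (Finset.range m).image (fun j : ℕ => cshift u j) := by
      apply Finset.ext; intro f
      simp only [Finset.mem_image, Finset.mem_univ, true_and, Finset.mem_range]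
      constructor
      · rintro ⟨j, rfl⟩
        exact ⟨(j : ℕ) % m, Nat.mod_lt _ hm, keymod j⟩
      · rintro ⟨r, hr, rfl⟩
        exact ⟨⟨r, lt_of_lt_of_le hr (Nat.le_mul_of_pos_right m hk)⟩, rfl⟩
    rw [himg, Finset.card_image_of_injOn, Finset.card_range]
    intro a ha b hb hab
    simp only [Finset.coe_range, Set.mem_Iio] at ha hb
    exact cshift_inj v hv ha hb (desc a b hab)
  · have hdens : density u = density v * k := by
      unfold density
      have hcard : (Finset.univ.filter (fun i : Fin (m * k) => u i = true)).card
          = ((Finset.univ.filter (fun a : Fin m => v a = true)) ×ˢ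
              (Finset.univ : Finset (Fin k))).card := by
        apply Finset.card_bij'
          (fun i _ => (⟨(i : ℕ) % m, Nat.mod_lt _ hm⟩,
            ⟨(i : ℕ) / m, Nat.div_lt_of_lt_mul i.isLt⟩))
          (fun p _ => ⟨(p.1 : ℕ) + m * (p.2 : ℕ), by
            have h1 : (p.1 : ℕ) + m * (p.2 : ℕ) < m * ((p.2 : ℕ) + 1) := by
              rw [Nat.mul_add, Nat.mul_one]
              have := p.1.isLt; omega
            exact lt_of_lt_of_le h1 (Nat.mul_le_mul_left m p.2.isLt)⟩)
        case hi =>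
          intro i hi
          simp only [Finset.mem_filter, Finset.mem_univ, true_and] at hi ⊢
          rw [Finset.mem_product]
          refine ⟨?_, Finset.mem_univ _⟩
          simp only [Finset.mem_filter, Finset.mem_univ, true_and]
          rw [hu] at hi
          exact hi
        case hj =>
          intro p hp
          simp only [Finset.mem_product, Finset.mem_filter, Finset.mem_univ, true_and] at hp
          simp only [Finset.mem_filter, Finset.mem_univ, true_and]
          rw [hu]
          have he : ((p.1 : ℕ) + m * (p.2 : ℕ)) % m = (p.1 : ℕ) := by
            rw [Nat.add_mul_mod_self_left, Nat.mod_eq_of_lt p.1.isLt]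
          have : (⟨((p.1 : ℕ) + m * (p.2 : ℕ)) % m, Nat.mod_lt _ hm⟩ : Fin m) = p.1 :=
            Fin.ext he
          rw [this]
          exact hp.1
        case left_inv =>
          intro i hi
          apply Fin.ext
          exact Nat.mod_add_div (i : ℕ) m
        case right_inv =>
          intro p hp
          apply Prod.ext
          · apply Fin.ext
            show ((p.1 : ℕ) + m * (p.2 : ℕ)) % m = (p.1 : ℕ)
            rw [Nat.add_mul_mod_self_left, Nat.mod_eq_of_lt p.1.isLt]
          · apply Fin.ext
            show ((p.1 : ℕ) + m * (p.2 : ℕ)) / m = (p.2 : ℕ)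
            rw [Nat.add_mul_div_left _ _ hm, Nat.div_eq_of_lt p.1.isLt, Nat.zero_add]
      rw [hcard, Finset.card_product, Finset.card_univ, Fintype.card_fin]
    intro i
    rw [hdivk, hdens, Nat.mul_div_cancel _ hk]
    apply Finset.card_bij'
      (fun j _ => (⟨((i : ℕ) + j) % m, Nat.mod_lt _ hm⟩ : Fin m))
      (fun t _ => (m - (i : ℕ) % m + (t : ℕ)) % m)
    case hi =>
      intro j hj
      simp only [Finset.mem_filter, Finset.mem_range] at hj
      simp only [Finset.mem_filter, Finset.mem_univ, true_and]
      rw [key] at hj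
      exact hj.2
    case hj =>
      intro t ht
      simp only [Finset.mem_filter, Finset.mem_univ, true_and] at ht
      simp only [Finset.mem_filter, Finset.mem_range]
      refine ⟨Nat.mod_lt _ hm, ?_⟩
      rw [key]
      have he : (⟨((i : ℕ) + (m - (i : ℕ) % m + (t : ℕ)) % m) % m, Nat.mod_lt _ hm⟩ : Fin m)
          = t := Fin.ext (mod_shift_eq hm (i : ℕ) (t : ℕ) t.isLt)
      rw [he]
      exact ht
    case left_inv =>
      intro j hj
      simp only [Finset.mem_filter, Finset.mem_range] at hj
      show (m - (i : ℕ) % m + (((i : ℕ) + j) % m)) % m = j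
      rw [Nat.add_mod_mod]
      have h1 : m - (i : ℕ) % m + ((i : ℕ) + j) = m * ((i : ℕ) / m) + (m + j) := by
        have h2 := Nat.div_add_mod (i : ℕ) m
        have h3 := Nat.mod_lt (i : ℕ) hm
        omega
      rw [h1, Nat.mul_add_mod, Nat.add_mod_left, Nat.mod_eq_of_lt hj.1]
    case right_inv =>
      intro t ht
      exact Fin.ext (mod_shift_eq hm (i : ℕ) (t : ℕ) t.isLt)
end

section
/- The number of rotation-equivalence classes of aperiodic binary words of length n with exactly d ones is (1/n) Σ_{j | gcd(n,d)} μ(j) C(n/j, d/j), where μ is the Möbius function. -/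
/-- Orbit (set of all cyclic shifts) of a binary word. -/
def orbitF {n : ℕ} (u : Fin n → Bool) : Finset (Fin n → Bool) :=
  Finset.univ.image (fun k : Fin n => cshift u k)

-- Number of rotation classes of aperiodic binary words of length `n` and density `d`.
open Classical in
noncomputable def LyndonCount (n d : ℕ) : ℕ :=
  ((Finset.univ.filter (fun u : Fin n → Bool => Aperiodic u ∧ density u = d)).image orbitF).card

-- Number of rotation classes of binary words of length `n` and density `d`.
open Classical in
noncomputable def NecklaceCount (n d : ℕ) : ℕ :=
  ((Finset.univ.filter (fun u : Fin n → Bool => density u = d)).image orbitF).card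

/-!
Rotation acts freely on aperiodic words, so `n * L(n,d)` is the number `A(n,d)` of aperiodic
words of length `n` and density `d`. Every word of length `n` is the `n / e`-fold repetition of
an aperiodic word of length `e`, namely its prefix up to its least period `e`; grouping the words
of density `d` by `j = n / e` gives `C(n,d) = ∑_{j ∣ gcd(n,d)} A(n/j, d/j)`. Writing `n = a g`,
`d = b g` with `a, b` coprime, this says `∑_{i ∣ m} A(a i, b i) = C(a m, b m)` for every `m`, and
Möbius inversion at `m = g` gives the formula.
-/

namespace BinaryWord

open Finset Fin.CommRing

section Rotation

variable {n : ℕ}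

lemma mem_orbitF {u w : Fin n → Bool} : w ∈ orbitF u ↔ ∃ k : Fin n, cshift u k = w := by
  simp [orbitF]

variable [NeZero n]

lemma cshift_apply (u : Fin n → Bool) (k : ℕ) (i : Fin n) : cshift u k i = u (i + k) := by
  unfold cshift; congr 1; ext; simp [Fin.val_add, Fin.val_natCast, Nat.add_mod]

lemma cshift_cshift (u : Fin n → Bool) (a b : ℕ) : cshift (cshift u a) b = cshift u (a + b) := by
  funext i; simp only [cshift_apply, Nat.cast_add, add_comm (a : Fin n), add_assoc]

lemma cshift_zero (u : Fin n → Bool) : cshift u 0 = u := by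
  funext i; simp [cshift_apply]

lemma cshift_self (u : Fin n → Bool) : cshift u n = u := by
  funext i; simp [cshift_apply]

lemma cshift_mul_of_cshift_eq {u : Fin n → Bool} {k : ℕ} (h : cshift u k = u) (q : ℕ) :
    cshift u (k * q) = u := by
  induction q with
  | zero => exact cshift_zero u
  | succ q ih => rw [Nat.mul_succ, ← cshift_cshift, ih, h]

lemma cshift_injective (k : ℕ) : Function.Injective (fun u : Fin n → Bool => cshift u k) := by
  intro u v h
  funext i
  simpa [cshift_apply] using congrFun h (i - k)

lemma cshift_sub_of_cshift_eq {u : Fin n → Bool} {a b : ℕ} (hab : a ≤ b)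
    (h : cshift u a = cshift u b) : cshift u (b - a) = u := by
  funext i
  simpa [cshift_apply, Nat.cast_sub hab, sub_eq_add_neg, add_assoc, add_comm (-(a : Fin n))]
    using congrFun h.symm (i - a)

lemma density_cshift (u : Fin n → Bool) (k : ℕ) : density (cshift u k) = density u := by
  unfold density
  exact card_equiv (Equiv.addRight (k : Fin n)) (by simp [cshift_apply])

lemma aperiodic_cshift {u : Fin n → Bool} (hu : Aperiodic u) (k : ℕ) : Aperiodic (cshift u k) := by
  intro m hm hm0 h
  rw [cshift_cshift, add_comm, ← cshift_cshift] at h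
  exact hu m hm hm0 (cshift_injective k h)

lemma mem_orbitF_self (u : Fin n → Bool) : u ∈ orbitF u :=
  mem_orbitF.mpr ⟨0, cshift_zero u⟩

lemma orbitF_cshift (u : Fin n → Bool) (k : ℕ) : orbitF (cshift u k) = orbitF u := by
  have hsub : ∀ (v : Fin n → Bool) (k : ℕ), orbitF (cshift v k) ⊆ orbitF v := by
    intro v k w hw
    obtain ⟨m, rfl⟩ := mem_orbitF.mp hw
    refine mem_orbitF.mpr ⟨(k + m : ℕ), ?_⟩
    funext i
    simp [cshift_apply, add_assoc, add_comm (m : Fin n)]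
  refine (hsub u k).antisymm ?_
  calc orbitF u = orbitF (cshift (cshift u k) (n * k - k)) := by
        rw [cshift_cshift, Nat.add_sub_cancel' (Nat.le_mul_of_pos_left k (NeZero.pos n)),
          cshift_mul_of_cshift_eq (cshift_self u)]
    _ ⊆ orbitF (cshift u k) := hsub _ _

lemma card_orbitF {u : Fin n → Bool} (hu : Aperiodic u) : #(orbitF u) = n := by
  rw [orbitF, card_image_of_injective, card_univ, Fintype.card_fin]
  intro a b h
  wlog hab : a ≤ b generalizing a b
  · exact (this h.symm (le_of_not_ge hab)).symm
  by_contra hne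
  exact hu (b - a) (by omega) (by omega) (cshift_sub_of_cshift_eq hab h)

lemma card_mul_card_image_orbitF {s : Finset (Fin n → Bool)} (hap : ∀ u ∈ s, Aperiodic u)
    (hs : ∀ u ∈ s, ∀ k, cshift u k ∈ s) : n * #(s.image orbitF) = #s := by
  rw [card_eq_sum_card_image orbitF s, sum_const_nat (m := n) fun O hO => ?_, mul_comm]
  obtain ⟨u, hu, rfl⟩ := mem_image.mp hO
  suffices {w ∈ s | orbitF w = orbitF u} = orbitF u by rw [this, card_orbitF (hap u hu)]
  ext w
  constructor
  · intro hw
    exact (mem_filter.mp hw).2 ▸ mem_orbitF_self w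
  · intro hw
    obtain ⟨k, rfl⟩ := mem_orbitF.mp hw
    exact mem_filter.mpr ⟨hs u hu k, orbitF_cshift u k⟩

end Rotation

open Classical in
noncomputable def aperiodicCount (n d : ℕ) : ℕ :=
  #{u : Fin n → Bool | Aperiodic u ∧ density u = d}

lemma mul_lyndonCount (n d : ℕ) [NeZero n] : n * LyndonCount n d = aperiodicCount n d := by
  classical
  refine card_mul_card_image_orbitF (fun u hu => (mem_filter.mp hu).2.1) fun u hu k => ?_
  obtain ⟨hap, hd⟩ := (mem_filter.mp hu).2
  exact mem_filter.mpr ⟨mem_univ _, aperiodic_cshift hap k, (density_cshift u k).trans hd⟩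

section Period

variable {n : ℕ} [NeZero n]

lemma exists_pos_cshift_eq_self (u : Fin n → Bool) : ∃ k, 0 < k ∧ cshift u k = u :=
  ⟨n, NeZero.pos n, cshift_self u⟩

noncomputable def minPeriod (u : Fin n → Bool) : ℕ :=
  Nat.find (exists_pos_cshift_eq_self u)

lemma minPeriod_pos (u : Fin n → Bool) : 0 < minPeriod u :=
  (Nat.find_spec (exists_pos_cshift_eq_self u)).1

lemma cshift_minPeriod (u : Fin n → Bool) : cshift u (minPeriod u) = u :=
  (Nat.find_spec (exists_pos_cshift_eq_self u)).2

lemma minPeriod_le {u : Fin n → Bool} {k : ℕ} (hk : 0 < k) (h : cshift u k = u) :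
    minPeriod u ≤ k :=
  Nat.find_min' _ ⟨hk, h⟩

lemma minPeriod_dvd {u : Fin n → Bool} {k : ℕ} (h : cshift u k = u) : minPeriod u ∣ k := by
  set m := minPeriod u
  have hmod : cshift u (k % m) = u := by
    rw [Nat.mod_eq_sub_mul_div]
    refine cshift_sub_of_cshift_eq (Nat.mul_div_le k m) ?_
    rw [cshift_mul_of_cshift_eq (cshift_minPeriod u), h]
  refine Nat.dvd_of_mod_eq_zero (Nat.eq_zero_of_not_pos fun hpos => ?_)
  exact absurd (minPeriod_le hpos hmod) (not_le.mpr (Nat.mod_lt k (minPeriod_pos u)))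

lemma minPeriod_dvd_self (u : Fin n → Bool) : minPeriod u ∣ n :=
  minPeriod_dvd (cshift_self u)

lemma aperiodic_iff_minPeriod_eq {u : Fin n → Bool} : Aperiodic u ↔ minPeriod u = n := by
  constructor
  · intro hu
    refine (Nat.le_of_dvd (NeZero.pos n) (minPeriod_dvd_self u)).antisymm (not_lt.mp fun hlt => ?_)
    exact hu _ hlt (minPeriod_pos u) (cshift_minPeriod u)
  · intro hu k hk hk0 h
    exact absurd (minPeriod_le hk0 h) (by omega)

end Period

section Repetition

variable {n e : ℕ} [NeZero e]

-- `((i : ℕ) : Fin e)` is `i mod e`.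
def repeatWord (n : ℕ) (v : Fin e → Bool) : Fin n → Bool := fun i => v (i : ℕ)

lemma repeatWord_comp_castLE (v : Fin e → Bool) (hen : e ≤ n) :
    repeatWord n v ∘ Fin.castLE hen = v := by
  funext i; simp [repeatWord]

lemma repeatWord_injective (hen : e ≤ n) :
    Function.Injective (repeatWord n : (Fin e → Bool) → Fin n → Bool) :=
  Function.LeftInverse.injective (g := (· ∘ Fin.castLE hen)) fun v => repeatWord_comp_castLE v hen

lemma cshift_repeatWord [NeZero n] (hen : e ∣ n) (v : Fin e → Bool) (m : ℕ) :
    cshift (repeatWord n v) m = repeatWord n (cshift v m) := by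
  funext i
  simp only [repeatWord, cshift_apply]
  congr 1
  ext
  simp [Fin.val_add, Fin.val_natCast, Nat.mod_mod_of_dvd _ hen, Nat.add_mod]

lemma repeatWord_comp_castLE_of_cshift_eq [NeZero n] (hen : e ∣ n) {u : Fin n → Bool}
    (h : cshift u e = u) :
    repeatWord n (u ∘ Fin.castLE (Nat.le_of_dvd (NeZero.pos n) hen)) = u := by
  funext i
  have hi := congrFun (cshift_mul_of_cshift_eq h ((i : ℕ) / e))
    (Fin.castLE (Nat.le_of_dvd (NeZero.pos n) hen) ((i : ℕ) : Fin e))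
  rw [cshift_apply] at hi
  simp only [repeatWord, Function.comp_apply, ← hi]
  congr 1
  ext
  simp only [Fin.val_add, Fin.val_castLE, Fin.val_natCast, Nat.add_mod_mod, Nat.mod_add_div,
    Nat.mod_eq_of_lt i.isLt]

lemma density_repeatWord (hen : e ∣ n) (v : Fin e → Bool) :
    density (repeatWord n v) = n / e * density v := by
  obtain ⟨q, rfl⟩ : ∃ q, n = q * e := ⟨n / e, (Nat.div_mul_cancel hen).symm⟩
  have hprod :
      q * density v = #((univ : Finset (Fin q)) ×ˢ ({i | v i = true} : Finset (Fin e))) := by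
    rw [card_product, card_fin, density]
  rw [Nat.mul_div_cancel _ (NeZero.pos e), hprod, density]
  refine card_equiv finProdFinEquiv.symm fun i => ?_
  have hmod : ((i : ℕ) : Fin e) = i.modNat := Fin.ext (by simp [Fin.val_natCast, Fin.modNat])
  rw [mem_filter]
  simp [repeatWord, hmod]

lemma minPeriod_repeatWord [NeZero n] (hen : e ∣ n) (v : Fin e → Bool) :
    minPeriod (repeatWord n v) = minPeriod v := by
  have hiff : ∀ m, cshift (repeatWord n v) m = repeatWord n v ↔ cshift v m = v := fun m => by
    rw [cshift_repeatWord hen]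
    exact ((repeatWord_injective (Nat.le_of_dvd (NeZero.pos n) hen)).eq_iff)
  exact (minPeriod_le (minPeriod_pos v) ((hiff _).mpr (cshift_minPeriod v))).antisymm
    (minPeriod_le (minPeriod_pos _) ((hiff _).mp (cshift_minPeriod _)))

end Repetition

section Counting

lemma card_density_eq_choose (n d : ℕ) : #{u : Fin n → Bool | density u = d} = n.choose d := by
  rw [show n.choose d = #(powersetCard d (univ : Finset (Fin n))) by simp]
  refine card_bij' (fun u _ => ({i | u i = true} : Finset (Fin n)))
    (fun s _ i => decide (i ∈ s)) ?_ ?_ ?_ ?_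
  · intro u hu
    rw [mem_filter] at hu
    simpa [mem_powersetCard, density] using hu.2
  · intro s hs
    rw [mem_filter]
    simpa [density, mem_powersetCard] using hs
  · intro u _
    funext i
    simp
  · intro s _
    ext i
    simp

variable {n : ℕ} [NeZero n]

lemma div_minPeriod_dvd_density (u : Fin n → Bool) : n / minPeriod u ∣ density u := by
  have : NeZero (minPeriod u) := ⟨(minPeriod_pos u).ne'⟩
  have hdvd := minPeriod_dvd_self u
  have h := density_repeatWord hdvd (u ∘ Fin.castLE (Nat.le_of_dvd (NeZero.pos n) hdvd))
  rw [repeatWord_comp_castLE_of_cshift_eq hdvd (cshift_minPeriod u)] at h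
  exact h ▸ dvd_mul_right _ _

lemma card_minPeriod_eq_aperiodicCount {e : ℕ} [NeZero e] (hen : e ∣ n) (d : ℕ) :
    #{u : Fin n → Bool | minPeriod u = e ∧ density u = n / e * d} = aperiodicCount e d := by
  classical
  have hle := Nat.le_of_dvd (NeZero.pos n) hen
  have hq : 0 < n / e := Nat.div_pos hle (NeZero.pos e)
  have hrep : ∀ u : Fin n → Bool, minPeriod u = e → repeatWord n (u ∘ Fin.castLE hle) = u :=
    fun u hu => repeatWord_comp_castLE_of_cshift_eq hen (hu ▸ cshift_minPeriod u)
  refine card_bij' (fun u _ => u ∘ Fin.castLE hle) (fun v _ => repeatWord n v) ?_ ?_ ?_ ?_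
  · intro u hu
    obtain ⟨hper, hd⟩ := (mem_filter.mp hu).2
    have hdens := density_repeatWord hen (u ∘ Fin.castLE hle)
    rw [hrep u hper, hd] at hdens
    refine mem_filter.mpr ⟨mem_univ _, ?_, (Nat.eq_of_mul_eq_mul_left hq hdens).symm⟩
    rw [aperiodic_iff_minPeriod_eq, ← minPeriod_repeatWord hen, hrep u hper, hper]
  · intro v hv
    obtain ⟨hap, hd⟩ := (mem_filter.mp hv).2
    refine mem_filter.mpr ⟨mem_univ _, ?_, by rw [density_repeatWord hen, hd]⟩
    rw [minPeriod_repeatWord hen, aperiodic_iff_minPeriod_eq.mp hap]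
  · exact fun u hu => hrep u (mem_filter.mp hu).2.1
  · exact fun v _ => repeatWord_comp_castLE v hle

lemma choose_eq_sum_aperiodicCount (d : ℕ) :
    n.choose d = ∑ j ∈ (n.gcd d).divisors, aperiodicCount (n / j) (d / j) := by
  rw [← card_density_eq_choose, card_eq_sum_card_fiberwise (f := fun u => n / minPeriod u)]
  · refine sum_congr rfl fun j hj => ?_
    have hjn : j ∣ n := (Nat.dvd_gcd_iff.mp (Nat.dvd_of_mem_divisors hj)).1
    have hjd : j ∣ d := (Nat.dvd_gcd_iff.mp (Nat.dvd_of_mem_divisors hj)).2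
    have hj0 : 0 < j := Nat.pos_of_mem_divisors hj
    have : NeZero (n / j) := ⟨(Nat.div_pos (Nat.le_of_dvd (NeZero.pos n) hjn) hj0).ne'⟩
    rw [← card_minPeriod_eq_aperiodicCount (Nat.div_dvd_of_dvd hjn),
      Nat.div_div_self hjn (NeZero.ne n), Nat.mul_div_cancel' hjd, filter_filter]
    refine congrArg card (filter_congr fun u _ => ?_)
    rw [and_comm, Nat.div_eq_iff_eq_mul_left (minPeriod_pos u) (minPeriod_dvd_self u),
      Nat.eq_div_iff_mul_eq_left hj0.ne' hjn, mul_comm, eq_comm]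
  · intro u hu
    have hd : density u = d := (mem_filter.mp hu).2
    refine Nat.mem_divisors.mpr ⟨Nat.dvd_gcd (Nat.div_dvd_of_dvd (minPeriod_dvd_self u))
      (hd ▸ div_minPeriod_dvd_density u), (Nat.gcd_pos_of_pos_left d (NeZero.pos n)).ne'⟩

end Counting

section Moebius

open ArithmeticFunction ArithmeticFunction.Moebius

lemma sum_divisors_aperiodicCount_mul {a b : ℕ} (ha : 0 < a) (hab : a.Coprime b) {m : ℕ}
    (hm : 0 < m) : ∑ i ∈ m.divisors, aperiodicCount (a * i) (b * i) = (a * m).choose (b * m) := by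
  have : NeZero (a * m) := ⟨(Nat.mul_pos ha hm).ne'⟩
  rw [choose_eq_sum_aperiodicCount, Nat.gcd_mul_right, hab.gcd_eq_one, one_mul,
    ← Nat.sum_div_divisors]
  refine sum_congr rfl fun j hj => ?_
  rw [Nat.mul_div_assoc a (Nat.dvd_of_mem_divisors hj),
    Nat.mul_div_assoc b (Nat.dvd_of_mem_divisors hj)]

lemma aperiodicCount_eq_sum_moebius (n d : ℕ) [NeZero n] :
    (aperiodicCount n d : ℤ) =
      ∑ j ∈ (n.gcd d).divisors, μ j * ((n / j).choose (d / j) : ℤ) := by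
  have hg : 0 < n.gcd d := Nat.gcd_pos_of_pos_left d (NeZero.pos n)
  obtain ⟨a, b, hab, hn, hd⟩ := Nat.exists_coprime n d
  have ha : 0 < a := Nat.pos_of_mul_pos_right (hn ▸ NeZero.pos n)
  have hinv := (sum_eq_iff_sum_smul_moebius_eq (f := fun i => (aperiodicCount (a * i) (b * i) : ℤ))
    (g := fun m => ((a * m).choose (b * m) : ℤ))).mp
    (fun m hm => by exact_mod_cast sum_divisors_aperiodicCount_mul ha hab hm) _ hg
  rw [Nat.sum_divisorsAntidiagonal (fun i j => μ i • ((a * j).choose (b * j) : ℤ)), ← hn, ← hd]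
    at hinv
  rw [← hinv]
  refine sum_congr rfl fun j hj => ?_
  rw [smul_eq_mul, ← Nat.mul_div_assoc a (Nat.dvd_of_mem_divisors hj),
    ← Nat.mul_div_assoc b (Nat.dvd_of_mem_divisors hj), ← hn, ← hd]

end Moebius

end BinaryWord

/-- The number of rotation classes of aperiodic binary words of length `n` with density `d`
satisfies `n · L(n,d) = Σ_{j ∣ gcd(n,d)} μ(j) · C(n/j, d/j)`. -/
theorem lyndon_count_formula (n d : ℕ) (hn : 0 < n) :
    (n : ℤ) * LyndonCount n d =
      ∑ j ∈ (Nat.gcd n d).divisors,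
        ArithmeticFunction.moebius j * (Nat.choose (n / j) (d / j) : ℤ) := by
  have : NeZero n := ⟨hn.ne'⟩
  rw [← BinaryWord.aperiodicCount_eq_sum_moebius, ← BinaryWord.mul_lyndonCount, Nat.cast_mul]
end

section
/- Let n, h, m, v be positive integers with 0 < h ≤ n, v ≤ m, mh = nv, and m ≤ C(n,h). Then there exists an m×n binary matrix with pairwise distinct rows, all row sums equal to h, and all column sums equal to v. -/
namespace ReconstructionAux

open Finset

variable {n : ℕ}

/-- Degree of vertex `j` in a family of subsets. -/
def deg (F : Finset (Finset (Fin n))) (j : Fin n) : ℕ :=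
  (F.filter (fun S => j ∈ S)).card

lemma sum_deg (F : Finset (Finset (Fin n))) (h : ℕ) (hF : ∀ S ∈ F, S.card = h) :
    ∑ j : Fin n, deg F j = F.card * h := by
  calc ∑ j : Fin n, deg F j = ∑ j : Fin n, ∑ S ∈ F, if j ∈ S then 1 else 0 := by
        refine Finset.sum_congr rfl fun j _ => ?_
        rw [deg, Finset.card_filter]
    _ = ∑ S ∈ F, ∑ j : Fin n, if j ∈ S then 1 else 0 := Finset.sum_comm
    _ = ∑ S ∈ F, S.card := by
        refine Finset.sum_congr rfl fun S _ => ?_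
        rw [← Finset.card_filter, Finset.filter_univ_mem]
    _ = F.card * h := by
        rw [Finset.sum_congr rfl hF, Finset.sum_const, smul_eq_mul]

lemma exists_swap (F : Finset (Finset (Fin n))) (h : ℕ) (hF : ∀ S ∈ F, S.card = h)
    (a b : Fin n) (hab : deg F b < deg F a) :
    ∃ F' : Finset (Finset (Fin n)), F'.card = F.card ∧ (∀ S ∈ F', S.card = h) ∧
      deg F' a + 1 = deg F a ∧ deg F' b = deg F b + 1 ∧
      ∀ j, j ≠ a → j ≠ b → deg F' j = deg F j := by
  have hne : a ≠ b := by rintro rfl; exact absurd rfl hab.ne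
  have hK1 : (F.filter fun S => a ∈ S ∧ b ∈ S).card
      + (F.filter fun S => a ∈ S ∧ b ∉ S).card = deg F a := by
    rw [deg, ← Finset.filter_filter, ← Finset.filter_filter,
      Finset.card_filter_add_card_filter_not]
  have hK2 : (F.filter fun S => a ∈ S ∧ b ∈ S).card
      + (F.filter fun S => b ∈ S ∧ a ∉ S).card = deg F b := by
    have hcomm : (F.filter fun S => a ∈ S ∧ b ∈ S)
        = (F.filter fun S => b ∈ S ∧ a ∈ S) := by
      apply Finset.filter_congr; intro S _; simp [and_comm]
    rw [hcomm, deg, ← Finset.filter_filter, ← Finset.filter_filter,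
      Finset.card_filter_add_card_filter_not]
  have hex : ∃ S ∈ F.filter (fun S => a ∈ S ∧ b ∉ S), insert b (S.erase a) ∉ F := by
    by_contra hcon
    push_neg at hcon
    have hsub : (F.filter fun S => a ∈ S ∧ b ∉ S).image (fun S => insert b (S.erase a))
        ⊆ F.filter (fun S => b ∈ S ∧ a ∉ S) := by
      intro T hT
      obtain ⟨S, hS, rfl⟩ := Finset.mem_image.mp hT
      refine Finset.mem_filter.mpr ⟨hcon S hS, Finset.mem_insert_self _ _, ?_⟩
      simp [Finset.mem_insert, Finset.mem_erase, hne]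
    have hinj : Set.InjOn (fun S : Finset (Fin n) => insert b (S.erase a))
        (↑(F.filter fun S => a ∈ S ∧ b ∉ S) : Set (Finset (Fin n))) := by
      intro S₁ h₁ S₂ h₂ heq
      simp only [Finset.coe_filter, Set.mem_setOf_eq] at h₁ h₂
      have e₁ : (insert b (S₁.erase a)).erase b = S₁.erase a :=
        Finset.erase_insert (by simp [Finset.mem_erase, h₁.2.2])
      have e₂ : (insert b (S₂.erase a)).erase b = S₂.erase a :=
        Finset.erase_insert (by simp [Finset.mem_erase, h₂.2.2])
      have hee : S₁.erase a = S₂.erase a := by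
        rw [← e₁, ← e₂]; simp only at heq; rw [heq]
      rw [← Finset.insert_erase h₁.2.1, hee, Finset.insert_erase h₂.2.1]
    have hle : (F.filter fun S => a ∈ S ∧ b ∉ S).card
        ≤ (F.filter fun S => b ∈ S ∧ a ∉ S).card := by
      rw [← Finset.card_image_of_injOn hinj]
      exact Finset.card_le_card hsub
    omega
  obtain ⟨S, hSmem, hS'notin⟩ := hex
  obtain ⟨hSF, haS, hbS⟩ := Finset.mem_filter.mp hSmem
  set S' : Finset (Fin n) := insert b (S.erase a) with hS'def
  have hbe : b ∉ S.erase a := by simp [Finset.mem_erase, hbS]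
  have haS' : a ∉ S' := by simp [hS'def, Finset.mem_insert, Finset.mem_erase, hne]
  have hbS' : b ∈ S' := Finset.mem_insert_self _ _
  have hcardS' : S'.card = S.card := by
    rw [hS'def, Finset.card_insert_of_notMem hbe, Finset.card_erase_of_mem haS]
    have : 0 < S.card := Finset.card_pos.mpr ⟨a, haS⟩
    omega
  have hS'ne : S' ∉ F.erase S := fun hc => hS'notin (Finset.mem_of_mem_erase hc)
  -- key degree computation
  have key : ∀ j : Fin n, deg (insert S' (F.erase S)) j + (if j ∈ S then 1 else 0)
      = deg F j + (if j ∈ S' then 1 else 0) := by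
    intro j
    have hbase : ((F.erase S).filter (fun T => j ∈ T)).card + (if j ∈ S then 1 else 0)
        = deg F j := by
      rw [Finset.filter_erase]
      split_ifs with hjS
      · have hmem : S ∈ F.filter (fun T => j ∈ T) := Finset.mem_filter.mpr ⟨hSF, hjS⟩
        rw [Finset.card_erase_of_mem hmem]
        have : 0 < (F.filter (fun T => j ∈ T)).card := Finset.card_pos.mpr ⟨S, hmem⟩
        unfold deg; omega
      · have hEq : (F.filter (fun T => j ∈ T)).erase S = F.filter (fun T => j ∈ T) :=
          Finset.erase_eq_of_notMem (fun hc => hjS (Finset.mem_filter.mp hc).2)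
        rw [hEq]; unfold deg; omega
    have hstep : deg (insert S' (F.erase S)) j
        = ((F.erase S).filter (fun T => j ∈ T)).card + (if j ∈ S' then 1 else 0) := by
      unfold deg
      rw [Finset.filter_insert]
      split_ifs with hjS'
      · rw [Finset.card_insert_of_notMem (fun hc => hS'ne (Finset.mem_of_mem_filter _ hc))]
      · omega
    omega
  refine ⟨insert S' (F.erase S), ?_, ?_, ?_, ?_, ?_⟩
  · rw [Finset.card_insert_of_notMem hS'ne, Finset.card_erase_of_mem hSF]
    have : 0 < F.card := Finset.card_pos.mpr ⟨S, hSF⟩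
    omega
  · intro T hT
    rcases Finset.mem_insert.mp hT with rfl | hT
    · rw [hcardS']; exact hF S hSF
    · exact hF T (Finset.mem_of_mem_erase hT)
  · have := key a; simp only [if_pos haS, if_neg haS'] at this; omega
  · have := key b; simp only [if_neg hbS, if_pos hbS'] at this; omega
  · intro j hja hjb
    have hiff : (j ∈ S') ↔ (j ∈ S) := by
      simp [hS'def, Finset.mem_insert, Finset.mem_erase, hja, hjb]
    have hk := key j
    by_cases hjmem : j ∈ S
    · rw [if_pos hjmem, if_pos (hiff.mpr hjmem)] at hk; omega
    · rw [if_neg hjmem, if_neg (fun hc => hjmem (hiff.mp hc))] at hk; omega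

lemma balance (h v : ℕ) : ∀ (Φ : ℕ) (F : Finset (Finset (Fin n))),
    (∀ S ∈ F, S.card = h) → F.card * h = n * v → (∑ j : Fin n, (deg F j)^2) ≤ Φ →
    ∃ G : Finset (Finset (Fin n)), G.card = F.card ∧ (∀ S ∈ G, S.card = h) ∧
      ∀ j, deg G j = v := by
  intro Φ
  induction Φ using Nat.strong_induction_on with
  | _ Φ ih =>
    intro F hF hsum hΦ
    by_cases hall : ∀ j, deg F j = v
    · exact ⟨F, rfl, hF, hall⟩
    · push_neg at hall
      obtain ⟨j0, hj0⟩ := hall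
      have hdegsum : ∑ j : Fin n, deg F j = n * v := by
        rw [sum_deg F h hF, hsum]
      have hvs : ∑ _j : Fin n, v = n * v := by
        simp [Finset.sum_const, Finset.card_univ, mul_comm]
      have ha : ∃ a, v < deg F a := by
        by_contra hno
        push_neg at hno
        have : ∑ j : Fin n, deg F j < ∑ _j : Fin n, v :=
          Finset.sum_lt_sum (fun i _ => hno i)
            ⟨j0, Finset.mem_univ _, lt_of_le_of_ne (hno j0) hj0⟩
        omega
      obtain ⟨a, ha⟩ := ha
      have hb : ∃ b, deg F b < v := by
        by_contra hno
        push_neg at hno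
        have : ∑ _j : Fin n, v < ∑ j : Fin n, deg F j :=
          Finset.sum_lt_sum (fun i _ => hno i) ⟨a, Finset.mem_univ _, ha⟩
        omega
      obtain ⟨b, hb⟩ := hb
      have hab : deg F b < deg F a := lt_trans hb ha
      obtain ⟨F', hcard', hF', hda, hdb, hother⟩ := exists_swap F h hF a b hab
      have hne : a ≠ b := by rintro rfl; exact absurd rfl hab.ne
      have hbmem : b ∈ (Finset.univ : Finset (Fin n)).erase a :=
        Finset.mem_erase.mpr ⟨hne.symm, Finset.mem_univ _⟩
      have hrest : ∑ j ∈ ((Finset.univ : Finset (Fin n)).erase a).erase b, (deg F' j)^2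
          = ∑ j ∈ ((Finset.univ : Finset (Fin n)).erase a).erase b, (deg F j)^2 := by
        refine Finset.sum_congr rfl fun j hj => ?_
        have hj1 := Finset.mem_erase.mp hj
        have hj2 := Finset.mem_erase.mp hj1.2
        rw [hother j hj2.1 hj1.1]
      have hsplit : ∀ g : Fin n → ℕ, ∑ j : Fin n, g j
          = g a + (g b + ∑ j ∈ ((Finset.univ : Finset (Fin n)).erase a).erase b, g j) := by
        intro g
        rw [Finset.add_sum_erase _ g hbmem, Finset.add_sum_erase _ g (Finset.mem_univ a)]
      have hident : ∑ j : Fin n, (deg F' j)^2 + 2 * deg F a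
          = ∑ j : Fin n, (deg F j)^2 + 2 * deg F b + 2 := by
        rw [hsplit (fun j => (deg F' j)^2), hsplit (fun j => (deg F j)^2), hrest]
        have ha1 : deg F a = deg F' a + 1 := by omega
        have e1 : (deg F' a)^2 + 2 * deg F a = (deg F a)^2 + 1 := by
          rw [ha1]; ring
        have e2 : (deg F' b)^2 = (deg F b)^2 + 2 * deg F b + 1 := by
          rw [hdb]; ring
        set R := ∑ j ∈ ((Finset.univ : Finset (Fin n)).erase a).erase b, (deg F j)^2
        set p := (deg F' a)^2
        set q := (deg F' b)^2
        set p' := (deg F a)^2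
        set q' := (deg F b)^2
        omega
      have hΦ' : ∑ j : Fin n, (deg F' j)^2 < Φ := by
        set P := ∑ j : Fin n, (deg F' j)^2
        set Q := ∑ j : Fin n, (deg F j)^2
        omega
      obtain ⟨G, hG1, hG2, hG3⟩ := ih (∑ j : Fin n, (deg F' j)^2) hΦ' F' hF'
        (by rw [hcard']; exact hsum) le_rfl
      exact ⟨G, by rw [hG1, hcard'], hG2, hG3⟩

end ReconstructionAux

/-- Sufficiency: under the three consistency conditions there is an `m × n` binary matrix
with pairwise distinct rows, all row sums `h` and all column sums `v`. -/
theorem reconstruction_exists (n h m v : ℕ) (hn : 0 < n) (hh : 0 < h) (hm : 0 < m)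
    (hv : 0 < v) (hhn : h ≤ n) (hvm : v ≤ m) (heq : m * h = n * v)
    (hchoose : m ≤ Nat.choose n h) :
    ∃ A : Fin m → Fin n → Bool, Function.Injective A ∧
      (∀ i, (Finset.univ.filter (fun j => A i j = true)).card = h) ∧
      (∀ j, (Finset.univ.filter (fun i => A i j = true)).card = v) := by
  classical
  obtain ⟨F0, hF0sub, hF0card⟩ :=
    Finset.exists_subset_card_eq (s := (Finset.univ : Finset (Fin n)).powersetCard h)
      (n := m)
      (by rw [Finset.card_powersetCard, Finset.card_univ, Fintype.card_fin]; exact hchoose)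
  have hF0 : ∀ S ∈ F0, S.card = h := fun S hS =>
    Finset.mem_powersetCard_univ.mp (hF0sub hS)
  obtain ⟨G, hGcard, hGsize, hGdeg⟩ :=
    ReconstructionAux.balance h v (∑ j : Fin n, (ReconstructionAux.deg F0 j)^2) F0 hF0
      (by rw [hF0card]; exact heq) le_rfl
  have hGm : G.card = m := by rw [hGcard, hF0card]
  let e : Fin m ≃ {S // S ∈ G} := (finCongr hGm.symm).trans G.equivFin.symm
  refine ⟨fun i j => decide (j ∈ (e i : Finset (Fin n))), ?_, ?_, ?_⟩
  · intro i i' hA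
    have hset : (e i : Finset (Fin n)) = (e i' : Finset (Fin n)) := by
      ext j
      have := congrFun hA j
      simpa using this
    exact e.injective (Subtype.ext hset)
  · intro i
    have hfe : (Finset.univ.filter fun j => decide (j ∈ (e i : Finset (Fin n))) = true)
        = Finset.univ.filter fun j => j ∈ (e i : Finset (Fin n)) := by
      apply Finset.filter_congr; intro j _; simp
    rw [hfe, Finset.filter_univ_mem]
    exact hGsize _ (e i).2
  · intro j
    have hcard : (Finset.univ.filter fun i => decide (j ∈ (e i : Finset (Fin n))) = true).card
        = (G.filter fun S => j ∈ S).card := by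
      refine Finset.card_bij (fun i _ => (e i : Finset (Fin n))) ?_ ?_ ?_
      · intro i hi
        refine Finset.mem_filter.mpr ⟨(e i).2, ?_⟩
        have := (Finset.mem_filter.mp hi).2
        simpa using this
      · intro i₁ _ i₂ _ hEq
        exact e.injective (Subtype.ext hEq)
      · intro S hS
        obtain ⟨hSG, hjS⟩ := Finset.mem_filter.mp hS
        refine ⟨e.symm ⟨S, hSG⟩, ?_, by simp⟩
        refine Finset.mem_filter.mpr ⟨Finset.mem_univ _, ?_⟩
        simpa using hjS
    rw [hcard]
    exact hGdeg j
end

section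
/- There exists an h-uniform hypergraph on n vertices with m hyperedges, all hyperedges pairwise distinct, in which every vertex has degree v, if and only if mh = nv, h ≤ n, v ≤ m, and v ≤ (h/n)·C(n,h). -/
/-!
Necessity is double counting (`∑ deg = m h`) together with `m ≤ C(n, h)`. For sufficiency start
from any `m` distinct `h`-sets. If some vertex `a` has degree above `v`, then, the average degree
being `v`, some `b` has degree below `v`; more edges contain `a` but not `b` than the reverse, so
for one such edge `A` the set `A - a + b` is not an edge yet. Replacing `A` by it keeps the family
`h`-uniform and lowers the total surplus `∑ₓ (deg x - v)⁺`, so iterating reaches a regular family.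
-/

open Finset

theorem Finset.exists_lt_of_sum_eq_of_exists_ne {ι M : Type*} [AddCommMonoid M] [LinearOrder M]
    [IsOrderedCancelAddMonoid M] {s : Finset ι} {f g : ι → M}
    (h : ∑ i ∈ s, f i = ∑ i ∈ s, g i) (hne : ∃ i ∈ s, f i ≠ g i) : ∃ i ∈ s, f i < g i := by
  contrapose! hne
  exact fun i hi => ((sum_eq_sum_iff_of_le hne).1 h.symm i hi).symm

theorem Finset.exists_injective_fin_iff {β : Type*} [DecidableEq β] {m : ℕ}
    (P : Finset β → Prop) :
    (∃ E : Fin m → β, Function.Injective E ∧ P (univ.image E)) ↔ ∃ s : Finset β, #s = m ∧ P s := by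
  constructor
  · rintro ⟨E, hE, hP⟩
    exact ⟨_, by rw [card_image_of_injective _ hE, card_fin], hP⟩
  · rintro ⟨s, rfl, hP⟩
    refine ⟨fun i => s.equivFin.symm i, Subtype.val_injective.comp s.equivFin.symm.injective, ?_⟩
    convert hP
    ext A
    simp only [mem_image, mem_univ, true_and]
    exact ⟨fun ⟨i, hi⟩ => hi ▸ (s.equivFin.symm i).2, fun hA => ⟨s.equivFin ⟨A, hA⟩, by simp⟩⟩

namespace SetFamily

variable {α : Type*} [DecidableEq α] {𝒜 : Finset (Finset α)} {A B : Finset α} {a b : α}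

def degree (𝒜 : Finset (Finset α)) (x : α) : ℕ := #{A ∈ 𝒜 | x ∈ A}

theorem card_filter_mem_eq_degree_image {ι : Type*} [Fintype ι] {E : ι → Finset α}
    (hE : Function.Injective E) (x : α) : #{i | x ∈ E i} = degree (univ.image E) x := by
  rw [degree, filter_image, card_image_of_injective _ hE]

theorem sum_degree [Fintype α] (𝒜 : Finset (Finset α)) : ∑ x, degree 𝒜 x = ∑ A ∈ 𝒜, #A := by
  simpa [bipartiteAbove, bipartiteBelow, degree] using
    sum_card_bipartiteAbove_eq_sum_card_bipartiteBelow (r := (· ∈ ·)) (s := univ) (t := 𝒜)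

theorem degree_eq_card_add_card (𝒜 : Finset (Finset α)) (a b : α) :
    degree 𝒜 a = #{A ∈ 𝒜 | a ∈ A ∧ b ∈ A} + #{A ∈ 𝒜 | a ∈ A ∧ b ∉ A} := by
  rw [degree, ← card_filter_add_card_filter_not (fun A => b ∈ A), filter_filter, filter_filter]

theorem degree_insert_erase (hA : A ∈ 𝒜) (hB : B ∉ 𝒜) (x : α) :
    degree (insert B (𝒜.erase A)) x + (if x ∈ A then 1 else 0) =
      degree 𝒜 x + if x ∈ B then 1 else 0 := by
  simp only [degree, card_filter]
  rw [sum_insert fun h => hB (mem_of_mem_erase h), add_assoc, sum_erase_add _ _ hA, add_comm]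

theorem degree_insert_erase_le (hA : A ∈ 𝒜) (hB : B ∉ 𝒜) {x : α} (hx : x ∈ B → x ∈ A) :
    degree (insert B (𝒜.erase A)) x ≤ degree 𝒜 x := by
  have := degree_insert_erase hA hB x
  by_cases hxB : x ∈ B
  · simp only [hx hxB, hxB, if_true] at this
    omega
  · simp only [hxB, if_false] at this
    omega

theorem insert_erase_insert_erase (ha : a ∈ A) (hb : b ∉ A) :
    insert a ((insert b (A.erase a)).erase b) = A := by
  rw [erase_insert fun h => hb (mem_of_mem_erase h), insert_erase ha]

theorem exists_mem_insert_erase_notMem (hd : degree 𝒜 b < degree 𝒜 a) :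
    ∃ A ∈ 𝒜, a ∈ A ∧ b ∉ A ∧ insert b (A.erase a) ∉ 𝒜 := by
  have hab : a ≠ b := ne_of_apply_ne (degree 𝒜) hd.ne'
  have hlt : #{A ∈ 𝒜 | b ∈ A ∧ a ∉ A} < #{A ∈ 𝒜 | a ∈ A ∧ b ∉ A} := by
    rw [degree_eq_card_add_card 𝒜 a b, degree_eq_card_add_card 𝒜 b a] at hd
    simp only [and_comm (a := b ∈ _) (b := a ∈ _)] at hd
    omega
  by_contra! hall
  refine hlt.not_ge (card_le_card_of_injOn (fun A => insert b (A.erase a)) ?_ ?_)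
  · intro A hA
    simp only [coe_filter, Set.mem_ofPred_eq] at hA ⊢
    exact ⟨hall A hA.1 hA.2.1 hA.2.2, mem_insert_self _ _, by simp [hab]⟩
  · intro A hA B hB hAB
    simp only [coe_filter, Set.mem_ofPred_eq] at hA hB
    rw [← insert_erase_insert_erase hA.2.1 hA.2.2, ← insert_erase_insert_erase hB.2.1 hB.2.2]
    exact congrArg (fun C => insert a (C.erase b)) hAB

variable [Fintype α] {r v : ℕ}

/-- The subtraction is truncated on purpose: only degrees above `v` contribute. -/
def excess (𝒜 : Finset (Finset α)) (v : ℕ) : ℕ := ∑ x, (degree 𝒜 x - v)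

theorem exists_sized_excess_lt (h𝒜 : (𝒜 : Set (Finset α)).Sized r)
    (hsum : #𝒜 * r = Fintype.card α * v) (hnreg : ∃ x, degree 𝒜 x ≠ v) :
    ∃ ℬ : Finset (Finset α), #ℬ = #𝒜 ∧ (ℬ : Set (Finset α)).Sized r ∧
      excess ℬ v < excess 𝒜 v := by
  have hdeg : ∑ x, degree 𝒜 x = ∑ _x : α, v := by
    rw [sum_degree, sum_const_nat fun A hA => h𝒜 hA, hsum, sum_const, card_univ, smul_eq_mul]
  obtain ⟨a, -, ha⟩ :=
    exists_lt_of_sum_eq_of_exists_ne hdeg.symm (by simpa [eq_comm] using hnreg)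
  obtain ⟨b, -, hb⟩ := exists_lt_of_sum_eq_of_exists_ne hdeg (by simpa using hnreg)
  obtain ⟨A, hA, haA, hbA, hA'⟩ := exists_mem_insert_erase_notMem (hb.trans ha)
  have hab : a ≠ b := by rintro rfl; omega
  set A' := insert b (A.erase a) with hA'_def
  set ℬ := insert A' (𝒜.erase A)
  have hcardA' : #A' = #A := by
    rw [card_insert_of_notMem fun h => hbA (mem_of_mem_erase h), card_erase_add_one haA]
  have hdeg_a : degree ℬ a + 1 = degree 𝒜 a := by
    simpa [haA, hA'_def, hab] using degree_insert_erase hA hA' a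
  have hdeg_b : degree ℬ b = degree 𝒜 b + 1 := by
    simpa [hbA, hA'_def] using degree_insert_erase hA hA' b
  refine ⟨ℬ, ?_, ?_, ?_⟩
  · rw [card_insert_of_notMem fun h => hA' (mem_of_mem_erase h), card_erase_add_one hA]
  · intro B hB
    rw [mem_coe, mem_insert] at hB
    rcases hB with rfl | hB
    exacts [hcardA'.trans (h𝒜 hA), h𝒜 (mem_of_mem_erase hB)]
  · refine sum_lt_sum (fun x _ => ?_) ⟨a, mem_univ a, by omega⟩
    by_cases hxb : x = b
    · subst hxb
      omega
    · have : degree ℬ x ≤ degree 𝒜 x := degree_insert_erase_le hA hA' fun hx =>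
        mem_of_mem_erase ((mem_insert.1 hx).resolve_left hxb)
      omega

theorem exists_sized_regular_of_sized (h𝒜 : (𝒜 : Set (Finset α)).Sized r)
    (hsum : #𝒜 * r = Fintype.card α * v) :
    ∃ ℬ : Finset (Finset α), #ℬ = #𝒜 ∧ (ℬ : Set (Finset α)).Sized r ∧ ∀ x, degree ℬ x = v := by
  induction hk : excess 𝒜 v using Nat.strong_induction_on generalizing 𝒜 with
  | _ k ih =>
    by_cases hreg : ∀ x, degree 𝒜 x = v
    · exact ⟨𝒜, rfl, h𝒜, hreg⟩
    push Not at hreg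
    obtain ⟨ℬ, hcard, hℬ, hlt⟩ := exists_sized_excess_lt h𝒜 hsum hreg
    obtain ⟨𝒞, h𝒞card, h𝒞⟩ := ih _ (hk ▸ hlt) hℬ (hcard ▸ hsum) rfl
    exact ⟨𝒞, h𝒞card.trans hcard, h𝒞⟩

theorem exists_sized_regular_iff {m : ℕ} (hr : 0 < r) (hm : 0 < m) :
    (∃ 𝒜 : Finset (Finset α), #𝒜 = m ∧ (𝒜 : Set (Finset α)).Sized r ∧ ∀ x, degree 𝒜 x = v) ↔
      m * r = Fintype.card α * v ∧ r ≤ Fintype.card α ∧ v ≤ m ∧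
        Fintype.card α * v ≤ r * (Fintype.card α).choose r := by
  constructor
  · rintro ⟨𝒜, rfl, h𝒜, hreg⟩
    have hsum : #𝒜 * r = Fintype.card α * v := by
      rw [← sum_const_nat fun A hA => h𝒜 hA, sum_card hreg]
    obtain ⟨A, hA⟩ := card_pos.1 hm
    have hr_le : r ≤ Fintype.card α := h𝒜 hA ▸ card_le_univ A
    obtain ⟨x⟩ : Nonempty α := Fintype.card_pos_iff.1 (hr.trans_le hr_le)
    refine ⟨hsum, hr_le, hreg x ▸ card_filter_le _ _, ?_⟩
    rw [← hsum, mul_comm]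
    exact Nat.mul_le_mul_left r h𝒜.card_le
  · rintro ⟨hsum, -, -, hchoose⟩
    have hm_le : m ≤ (Fintype.card α).choose r :=
      Nat.le_of_mul_le_mul_right (by rwa [hsum, mul_comm _ r]) hr
    obtain ⟨𝒜, h𝒜, rfl⟩ := exists_subset_card_eq
      (show m ≤ #(powersetCard r (univ : Finset α)) by rwa [card_powersetCard, card_univ])
    exact exists_sized_regular_of_sized (subset_powersetCard_univ_iff.1 h𝒜) hsum

end SetFamily

open SetFamily in
theorem regular_hypergraph_iff_general (n h m v : ℕ) (hh : 0 < h) (hm : 0 < m) :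
    (∃ E : Fin m → Finset (Fin n), Function.Injective E ∧
      (∀ i, (E i).card = h) ∧
      (∀ x : Fin n, (Finset.univ.filter (fun i => x ∈ E i)).card = v)) ↔
    (m * h = n * v ∧ h ≤ n ∧ v ≤ m ∧ n * v ≤ h * Nat.choose n h) := by
  have hfamily := exists_injective_fin_iff (m := m)
    fun 𝒜 : Finset (Finset (Fin n)) => (𝒜 : Set (Finset (Fin n))).Sized h ∧ ∀ x, degree 𝒜 x = v
  rw [exists_sized_regular_iff hh hm, Fintype.card_fin] at hfamily
  rw [← hfamily]
  refine exists_congr fun E => and_congr_right fun hE => ?_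
  simp [Set.Sized, card_filter_mem_eq_degree_image hE]

/-- Characterization of `h`-uniform `v`-regular simple hypergraphs on `n` vertices with
`m` hyperedges. -/
theorem regular_hypergraph_iff (n h m v : ℕ) (hn : 0 < n) (hh : 0 < h) (hm : 0 < m)
    (hv : 0 < v) :
    (∃ E : Fin m → Finset (Fin n), Function.Injective E ∧
      (∀ i, (E i).card = h) ∧
      (∀ x : Fin n, (Finset.univ.filter (fun i => x ∈ E i)).card = v)) ↔
    (m * h = n * v ∧ h ≤ n ∧ v ≤ m ∧ n * v ≤ h * Nat.choose n h) :=
  regular_hypergraph_iff_general n h m v hh hm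
end
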